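/- arXiv:1408.3869 — 3 statements merged into one kernel-verified Lean document; each statement's English description precedes it below -/
import Mathlib

section
/- Let G be a finite graph, W ⊆ V(G), and let s, ε > 0 be real numbers. If G contains an (s, 5ε)-tame W-cloud, then G also contains a strongly (s, ε)-tame W-cloud. -/
open Finset

universe u

variable {V : Type u} [Fintype V] [DecidableEq V]

/-- `u` and `v` both belong to the subgraph `H` and are connected in `H`. -/
def CReach {G : SimpleGraph V} (H : G.Subgraph) (u v : V) : Prop :=
  ∃ (hu : u ∈ H.verts) (hv : v ∈ H.verts), H.coe.Reachable ⟨u, hu⟩ ⟨v, hv⟩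

/-- The vertex set of the connected component `H_w` of `H` containing `w`. -/
def cloudComp {G : SimpleGraph V} (H : G.Subgraph) (w : V) : Set V :=
  {v | CReach H w v}

/-- `n(H, U) = Σ_{w ∈ U} |V(H_w)|`. -/
noncomputable def cloudSize {G : SimpleGraph V} (H : G.Subgraph) (U : Finset V) : ℕ :=
  ∑ w ∈ U, (cloudComp H w).ncard

/-- `H` is a `W`-cloud in `G`: a forest subgraph of `G` in which every connected
component contains exactly one vertex of `W`. -/
def IsCloud (G : SimpleGraph V) (W : Finset V) (H : G.Subgraph) : Prop :=
  H.coe.IsAcyclic ∧ (↑W : Set V) ⊆ H.verts ∧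
    ∀ v ∈ H.verts, ∃! w, w ∈ W ∧ CReach H v w

/-- `H` is an `(s, ε)`-tame `W`-cloud: `n(H, U) ≥ s` for every `U ⊆ W` with
`|U| ≥ (1 - ε)|W|`. -/
def IsTameCloud (G : SimpleGraph V) (W : Finset V) (H : G.Subgraph) (s ε : ℝ) : Prop :=
  IsCloud G W H ∧
    ∀ U ⊆ W, (1 - ε) * (W.card : ℝ) ≤ (U.card : ℝ) → s ≤ (cloudSize H U : ℝ)

/-- `H` is a strongly `(s, ε)`-tame `W`-cloud: `n(H, U) ≥ s + 3 n(H, W \ U)` for every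
`U ⊆ W` with `|U| ≥ (1 - ε)|W|`. -/
def IsStronglyTameCloud (G : SimpleGraph V) (W : Finset V) (H : G.Subgraph) (s ε : ℝ) : Prop :=
  IsCloud G W H ∧
    ∀ U ⊆ W, (1 - ε) * (W.card : ℝ) ≤ (U.card : ℝ) →
      s + 3 * (cloudSize H (W \ U) : ℝ) ≤ (cloudSize H U : ℝ)

/-! Let `k = ⌊ε|W|⌋` and let `a` be the size of the smallest of the `4k` largest components.
Cutting every component down to a subtree of `min (size) a` vertices keeps a `W`-cloud. The
components outside the `4k` largest are untouched and, as their roots number at least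
`(1 - 5ε)|W|`, weigh at least `s`; the `4k` largest now weigh exactly `4ka`. A set `U` with
`|U| ≥ (1 - ε)|W|` misses at most `k` roots, which carry at most `ka`, so
`n(U) ≥ s + 4ka - ka ≥ s + 3 n(W \ U)`. -/

namespace Finset

variable {ι α : Type*} [DecidableEq ι] [LinearOrder α]

lemma exists_subset_card_eq_forall_le (f : ι → α) (W : Finset ι) {t : ℕ} (ht : t ≤ #W) :
    ∃ T ⊆ W, #T = t ∧ ∀ x ∈ T, ∀ y ∈ W \ T, f y ≤ f x := by
  induction t with
  | zero => exact ⟨∅, empty_subset W, rfl, by simp⟩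
  | succ t ih =>
    obtain ⟨T, hTW, hT, htop⟩ := ih (Nat.le_of_succ_le ht)
    have hne : (W \ T).Nonempty := by
      rw [← card_pos, card_sdiff_of_subset hTW]
      omega
    obtain ⟨y₀, hy₀, hy₀max⟩ := exists_max_image (W \ T) f hne
    rw [mem_sdiff] at hy₀
    refine ⟨insert y₀ T, insert_subset hy₀.1 hTW, by rw [card_insert_of_notMem hy₀.2, hT], ?_⟩
    intro x hx y hy
    have hyT : y ∈ W \ T := sdiff_subset_sdiff le_rfl (subset_insert y₀ T) hy
    rcases mem_insert.mp hx with rfl | hx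
    · exact hy₀max y hyT
    · exact htop x hx y hyT

lemma exists_threshold [OrderBot α] (f : ι → α) {W : Finset ι} {c : α} (hc : ∀ w ∈ W, c ≤ f w)
    {t : ℕ} (ht : t ≤ #W) :
    ∃ T ⊆ W, #T = t ∧ ∃ a, c ≤ a ∧ (∀ w ∈ T, a ≤ f w) ∧ ∀ w ∈ W \ T, f w ≤ a := by
  obtain ⟨T, hTW, hT, htop⟩ := exists_subset_card_eq_forall_le f W ht
  refine ⟨T, hTW, hT, (W \ T).sup f ⊔ c, le_sup_right, fun w hw => ?_, fun w hw => ?_⟩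
  · exact sup_le (Finset.sup_le fun y hy => htop w hw y hy) (hc w (hTW hw))
  · exact le_sup_of_le_left (le_sup hw)

end Finset

lemma sum_sdiff_add_mul_sum_sdiff_le {ι : Type*} [DecidableEq ι] {g : ι → ℕ} {W T U : Finset ι}
    {a c k : ℕ} (hTW : T ⊆ W) (hUW : U ⊆ W) (hT : (c + 1) * k ≤ #T) (hU : #(W \ U) ≤ k)
    (hTa : ∀ w ∈ T, a ≤ g w) (hWUa : ∀ w ∈ W \ U, g w ≤ a) :
    ∑ w ∈ W \ T, g w + c * ∑ w ∈ W \ U, g w ≤ ∑ w ∈ U, g w := by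
  have hout : ∑ w ∈ W \ U, g w ≤ k * a :=
    (sum_le_card_nsmul _ _ _ hWUa).trans (by rw [smul_eq_mul]; exact Nat.mul_le_mul_right a hU)
  have hin : (c + 1) * k * a ≤ ∑ w ∈ T, g w :=
    (Nat.mul_le_mul_right a hT).trans (by simpa using card_nsmul_le_sum T g a hTa)
  have hsplit : ∑ w ∈ W \ T, g w + ∑ w ∈ T, g w = ∑ w ∈ W \ U, g w + ∑ w ∈ U, g w := by
    rw [sum_sdiff hTW, sum_sdiff hUW]
  have hc : c * ∑ w ∈ W \ U, g w ≤ c * (k * a) := Nat.mul_le_mul_left c hout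
  nlinarith

section Clouds

omit [Fintype V] [DecidableEq V]

variable {G : SimpleGraph V} {H H' : G.Subgraph} {W : Finset V} {u v x w : V}

namespace CReach

lemma refl (hu : u ∈ H.verts) : CReach H u u := ⟨hu, hu, .refl _⟩

lemma symm : CReach H u v → CReach H v u := fun ⟨hu, hv, h⟩ => ⟨hv, hu, h.symm⟩

lemma trans : CReach H u v → CReach H v x → CReach H u x :=
  fun ⟨hu, _, h₁⟩ ⟨_, hx, h₂⟩ => ⟨hu, hx, h₁.trans h₂⟩

lemma mem_left (h : CReach H u v) : u ∈ H.verts := h.1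

lemma mem_right (h : CReach H u v) : v ∈ H.verts := h.2.1

lemma mono (hle : H ≤ H') : CReach H u v → CReach H' u v :=
  fun ⟨hu, hv, h⟩ => ⟨hle.1 hu, hle.1 hv, h.map (SimpleGraph.Subgraph.inclusion hle)⟩

lemma of_adj (h : H.Adj u v) : CReach H u v :=
  ⟨H.edge_vert h, H.edge_vert h.symm, SimpleGraph.Adj.reachable (by simpa using h)⟩

lemma exists_adj_mem_notMem (h : CReach H u v) {S : Set V} (hu : u ∈ S) (hv : v ∉ S) :
    ∃ x ∈ S, ∃ y ∉ S, H.Adj x y := by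
  obtain ⟨hu', hv', ⟨p⟩⟩ := h
  obtain ⟨d, -, hx, hy⟩ := p.exists_boundary_dart (Subtype.val ⁻¹' S) hu hv
  exact ⟨d.fst, hx, d.snd, hy, by simpa using d.adj⟩

end CReach

lemma IsCloud.eq_of_creach (hH : IsCloud G W H) {w' : V} (hw : w ∈ W) (hw' : w' ∈ W)
    (h : CReach H w v) (h' : CReach H w' v) : w = w' := by
  obtain ⟨z, -, hz⟩ := hH.2.2 v h.mem_right
  exact (hz w ⟨hw, h.symm⟩).trans (hz w' ⟨hw', h'.symm⟩).symm

lemma subset_cloudComp_induce_insert {S : Set V} (hS : S ⊆ cloudComp (H.induce S) w)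
    {y : V} (hx : x ∈ S) (hxy : H.Adj x y) :
    insert y S ⊆ cloudComp (H.induce (insert y S)) w := by
  have hle : H.induce S ≤ H.induce (insert y S) :=
    SimpleGraph.Subgraph.induce_mono_right (Set.subset_insert y S)
  rintro v (rfl | hv)
  · exact ((hS hx).mono hle).trans
      (.of_adj ⟨Set.mem_insert_of_mem _ hx, Set.mem_insert _ _, hxy⟩)
  · exact (hS hv).mono hle

lemma exists_subset_cloudComp_ncard_eq {j : ℕ} (hj : 1 ≤ j) (hjn : j ≤ (cloudComp H w).ncard) :
    ∃ S : Set V, S.ncard = j ∧ S ⊆ cloudComp H w ∧ w ∈ S ∧ S ⊆ cloudComp (H.induce S) w := by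
  induction j, hj using Nat.le_induction with
  | base =>
    obtain ⟨v, hv⟩ := Set.nonempty_of_ncard_ne_zero (by omega : (cloudComp H w).ncard ≠ 0)
    refine ⟨{w}, Set.ncard_singleton w, Set.singleton_subset_iff.mpr (.refl hv.mem_left),
      rfl, ?_⟩
    rintro v rfl
    exact .refl (Set.mem_singleton v)
  | succ j hj ih =>
    obtain ⟨S, hS, hSw, hwS, hSconn⟩ := ih (by omega)
    have hSfin : S.Finite := Set.finite_of_ncard_pos (by omega)
    obtain ⟨v, hv, hvS⟩ := Set.exists_mem_notMem_of_ncard_lt_ncard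
      (show S.ncard < (cloudComp H w).ncard by omega) hSfin
    obtain ⟨x, hx, y, hy, hxy⟩ := CReach.exists_adj_mem_notMem hv hwS hvS
    refine ⟨insert y S, by rw [Set.ncard_insert_of_notMem hy hSfin, hS],
      Set.insert_subset ((hSw hx).trans (.of_adj hxy)) hSw, Set.mem_insert_of_mem y hwS,
      subset_cloudComp_induce_insert hSconn hx hxy⟩

lemma induce_le_of_subset_verts {X : Set V} (hX : X ⊆ H.verts) : H.induce X ≤ H :=
  (SimpleGraph.Subgraph.induce_mono_right hX).trans_eq SimpleGraph.Subgraph.induce_self_verts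

section Induce

variable {S : V → Set V}
  (hS : ∀ w ∈ W, S w ⊆ cloudComp H w ∧ w ∈ S w ∧ S w ⊆ cloudComp (H.induce (S w)) w)
include hS

lemma induce_biUnion_le : H.induce (⋃ w ∈ W, S w) ≤ H :=
  induce_le_of_subset_verts <|
    Set.iUnion₂_subset fun w hw => (hS w hw).1.trans fun _ hv => hv.mem_right

variable (hH : IsCloud G W H)
include hH

lemma IsCloud.cloudComp_induce_biUnion (hw : w ∈ W) :
    cloudComp (H.induce (⋃ w ∈ W, S w)) w = S w := by
  refine Set.Subset.antisymm (fun v hv => ?_) (fun v hv => ?_)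
  · obtain ⟨w', hw', hvw'⟩ := Set.mem_iUnion₂.mp hv.mem_right
    rwa [hH.eq_of_creach hw hw' (hv.mono (induce_biUnion_le hS)) ((hS w' hw').1 hvw')]
  · exact ((hS w hw).2.2 hv).mono
      (SimpleGraph.Subgraph.induce_mono_right (Set.subset_biUnion_of_mem (u := S) hw))

lemma IsCloud.induce_biUnion : IsCloud G W (H.induce (⋃ w ∈ W, S w)) := by
  have hle := induce_biUnion_le hS
  refine ⟨hH.1.comap (SimpleGraph.Subgraph.inclusion hle)
      (SimpleGraph.Subgraph.inclusion.injective hle),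
    fun w hw => Set.mem_iUnion₂_of_mem hw (hS w hw).2.1, fun v hv => ?_⟩
  obtain ⟨w, hw, hvw⟩ := Set.mem_iUnion₂.mp hv
  have hwv : CReach (H.induce (⋃ w ∈ W, S w)) w v := by
    rwa [← hH.cloudComp_induce_biUnion hS hw] at hvw
  exact ⟨w, ⟨hw, hwv.symm⟩, fun w' ⟨hw', hvw'⟩ =>
    hH.eq_of_creach hw' hw (hvw'.symm.mono hle) (hwv.mono hle)⟩

end Induce

lemma IsCloud.exists_trim (hH : IsCloud G W H) (g : V → ℕ)
    (hg : ∀ w ∈ W, 1 ≤ g w ∧ g w ≤ (cloudComp H w).ncard) :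
    ∃ H' : G.Subgraph, IsCloud G W H' ∧ ∀ w ∈ W, (cloudComp H' w).ncard = g w := by
  have hpiece : ∀ w, ∃ S : Set V, w ∈ W → S.ncard = g w ∧ S ⊆ cloudComp H w ∧ w ∈ S ∧
      S ⊆ cloudComp (H.induce S) w := fun w => by
    by_cases hw : w ∈ W
    · obtain ⟨S, hS⟩ := exists_subset_cloudComp_ncard_eq (hg w hw).1 (hg w hw).2
      exact ⟨S, fun _ => hS⟩
    · exact ⟨∅, fun h => absurd h hw⟩
  choose S hS using hpiece
  have hS' := fun w hw => (hS w hw).2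
  refine ⟨_, hH.induce_biUnion hS', fun w hw => ?_⟩
  rw [hH.cloudComp_induce_biUnion hS' hw, (hS w hw).1]

end Clouds

lemma IsCloud.exists_subset_isCloud_add_mul_le {G : SimpleGraph V} {W : Finset V}
    {H : G.Subgraph} (hH : IsCloud G W H) {c k : ℕ} (hk : (c + 1) * k ≤ #W) :
    ∃ T ⊆ W, #T = (c + 1) * k ∧ ∃ H' : G.Subgraph, IsCloud G W H' ∧
      ∀ U ⊆ W, #(W \ U) ≤ k → cloudSize H (W \ T) + c * cloudSize H' (W \ U) ≤ cloudSize H' U := by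
  set n : V → ℕ := fun w => (cloudComp H w).ncard
  have hn : ∀ w ∈ W, 1 ≤ n w := fun w hw =>
    (Set.ncard_pos).mpr ⟨w, .refl (hH.2.1 hw)⟩
  obtain ⟨T, hTW, hT, a, ha, hTa, hWTa⟩ := exists_threshold n hn hk
  obtain ⟨H', hH', hH'n⟩ := hH.exists_trim (fun w => min (n w) a)
    fun w hw => ⟨le_min (hn w hw) ha, min_le_left _ _⟩
  have hsize : ∀ U ⊆ W, cloudSize H' U = ∑ w ∈ U, min (n w) a :=
    fun U hU => sum_congr rfl fun w hw => hH'n w (hU hw)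
  have hWT : cloudSize H (W \ T) = ∑ w ∈ W \ T, min (n w) a :=
    sum_congr rfl fun w hw => (min_eq_left (hWTa w hw)).symm
  refine ⟨T, hTW, hT, H', hH', fun U hU hWU => ?_⟩
  rw [hsize U hU, hsize _ sdiff_subset, hWT]
  exact sum_sdiff_add_mul_sum_sdiff_le hTW hU hT.ge hWU
    (fun w hw => le_min (hTa w hw) le_rfl) fun w _ => min_le_right _ _

/-- If `G` contains an `(s, 5ε)`-tame `W`-cloud, then `G` contains a strongly
`(s, ε)`-tame `W`-cloud. -/
theorem exists_stronglyTameCloud (G : SimpleGraph V) (W : Finset V) (s ε : ℝ)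
    (hs : 0 < s) (hε : 0 < ε)
    (h : ∃ H : G.Subgraph, IsTameCloud G W H s (5 * ε)) :
    ∃ H : G.Subgraph, IsStronglyTameCloud G W H s ε := by
  obtain ⟨H, hH, htame⟩ := h
  have hW : 5 * ε * #W < #W := by
    by_contra! hle
    have := htame ∅ (empty_subset W) (by simp only [card_empty]; push_cast; linarith)
    simp only [cloudSize, sum_empty, CharP.cast_eq_zero] at this
    linarith
  set k := ⌊ε * #W⌋₊
  have hk : (k : ℝ) ≤ ε * #W := Nat.floor_le (by positivity)
  have h4k : (3 + 1) * k ≤ #W := by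
    have : ((3 + 1) * k : ℝ) ≤ #W := by nlinarith
    exact_mod_cast this
  obtain ⟨T, hTW, hT, H', hH', hbound⟩ := hH.exists_subset_isCloud_add_mul_le h4k
  have hsT : s ≤ cloudSize H (W \ T) := htame _ sdiff_subset <| by
    rw [card_sdiff_of_subset hTW, hT, Nat.cast_sub h4k]
    push_cast
    nlinarith
  refine ⟨H', hH', fun U hU hUcard => ?_⟩
  have hWU : #(W \ U) ≤ k := Nat.le_floor <| by
    rw [card_sdiff_of_subset hU, Nat.cast_sub (card_le_card hU)]
    linarith
  have hUbound : (cloudSize H (W \ T) : ℝ) + 3 * cloudSize H' (W \ U) ≤ cloudSize H' U := by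
    exact_mod_cast hbound U hU hWU
  linarith
end

section
/- Let G be a finite graph with a tangle T of order at least 70a + 1, where a ≥ 1 is such that every subgraph of G has a balanced separation of order at most a. Let (X,Y) be a separation of G of order at most 70a with (X,Y) ∈ T, chosen with |Y| minimal, and suppose G[X] has a separation (A,B) that is (3|Y|, 1/7)-skewed with respect to W = X ∩ Y. Then there exists a separation (X',Y') ∈ T of G of order at most 68a with |Y'| < |Y|, contradicting the minimality of |Y|. (Equivalently: under these hypotheses, no separation of G[X] is (3|Y|, 1/7)-skewed with respect to X ∩ Y.) -/
open Finset

universe u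

variable {V : Type u} [Fintype V] [DecidableEq V]

/-- `(A, B)` is a separation of the subgraph `H` of `G`: `A ∪ B` is the vertex set of `H`
and no edge of `H` has one end in `A \ B` and the other in `B \ A`.
Its order is `(A ∩ B).card`. -/
def SepOf {G : SimpleGraph V} (H : G.Subgraph) (A B : Finset V) : Prop :=
  (↑A ∪ ↑B : Set V) = H.verts ∧
    ∀ u v : V, H.Adj u v → ¬(u ∈ A \ B ∧ v ∈ B \ A)

/-- `(A, B)` is a balanced separation of the subgraph `H`:
`|A \ B| ≤ (2/3) |V(H)|` and `|B \ A| ≤ (2/3) |V(H)|`. -/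
def BalancedSepOf {G : SimpleGraph V} (H : G.Subgraph) (A B : Finset V) : Prop :=
  SepOf H A B ∧ 3 * (A \ B).card ≤ 2 * H.verts.ncard ∧ 3 * (B \ A).card ≤ 2 * H.verts.ncard

/-- `(A, B)` is an `(s, ε)`-skewed separation of `H` with respect to `W`:
`W ⊆ A`, `|A| ≤ 6s` and `|A ∩ B| ≤ 6ε|W|`. -/
def SkewedSepOf {G : SimpleGraph V} (H : G.Subgraph) (W A B : Finset V) (s ε : ℝ) : Prop :=
  SepOf H A B ∧ W ⊆ A ∧ (A.card : ℝ) ≤ 6 * s ∧ ((A ∩ B).card : ℝ) ≤ 6 * ε * (W.card : ℝ)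

/-- `(A, B)` is a g-separation of `G`: a pair of subgraphs with `A ∪ B = G` and
`E(A) ∩ E(B) = ∅`.  Its order is `(A.verts ∩ B.verts).ncard`. -/
def IsGSep (G : SimpleGraph V) (A B : G.Subgraph) : Prop :=
  A ⊔ B = ⊤ ∧ A.edgeSet ∩ B.edgeSet = ∅

/-- `T` is a tangle of order `θ ≥ 1` in `G`. -/
def IsTangle (G : SimpleGraph V) (T : Set (G.Subgraph × G.Subgraph)) (θ : ℕ) : Prop :=
  1 ≤ θ ∧
  (∀ p ∈ T, IsGSep G p.1 p.2) ∧
  (∀ A B : G.Subgraph, IsGSep G A B → (A.verts ∩ B.verts).ncard < θ →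
    (A, B) ∈ T ∨ (B, A) ∈ T) ∧
  (∀ p₁ ∈ T, ∀ p₂ ∈ T, ∀ p₃ ∈ T, p₁.1 ⊔ p₂.1 ⊔ p₃.1 ≠ (⊤ : G.Subgraph)) ∧
  (∀ p ∈ T, p.1.verts ≠ Set.univ)

/-- The tangle number of `G`: the maximum order of a tangle in `G` (`0` if `G` has
no tangle). -/
noncomputable def tangleNum (G : SimpleGraph V) : ℕ :=
  sSup {θ | ∃ T, IsTangle G T θ}

/-- The g-separation `(G[X], G[Y] - E(G[X ∩ Y]))` associated to a separation `(X, Y)`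
of `G`; a separation `(X, Y)` belongs to a tangle `T` if this pair does. -/
def sepPair (G : SimpleGraph V) (X Y : Finset V) : G.Subgraph × G.Subgraph :=
  ((⊤ : G.Subgraph).induce ↑X,
   ((⊤ : G.Subgraph).induce ↑Y).deleteEdges ((⊤ : G.Subgraph).induce (↑X ∩ ↑Y : Set V)).edgeSet)

set_option linter.unusedSectionVars false
set_option linter.unusedVariables false

variable {G : SimpleGraph V} {T : Set (G.Subgraph × G.Subgraph)} {θ : ℕ}

lemma sepPair_fst_verts (X Y : Finset V) : (sepPair G X Y).1.verts = ↑X := rfl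

lemma sepPair_snd_verts (X Y : Finset V) : (sepPair G X Y).2.verts = ↑Y := rfl

lemma sepPair_fst_adj {X Y : Finset V} {u v : V} :
    (sepPair G X Y).1.Adj u v ↔ u ∈ X ∧ v ∈ X ∧ G.Adj u v := by
  simp [sepPair]

lemma sepPair_snd_adj {X Y : Finset V} {u v : V} :
    (sepPair G X Y).2.Adj u v ↔ (u ∈ Y ∧ v ∈ Y ∧ G.Adj u v) ∧ ¬(u ∈ X ∩ Y ∧ v ∈ X ∩ Y) := by
  simp only [sepPair, SimpleGraph.Subgraph.deleteEdges_adj, SimpleGraph.Subgraph.mem_edgeSet,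
    SimpleGraph.Subgraph.induce_adj, SimpleGraph.Subgraph.top_adj, Set.mem_inter_iff,
    Finset.mem_coe, Finset.mem_inter]
  tauto

lemma sepOf_cases {H : G.Subgraph} {P Q : Finset V} (h : SepOf H P Q) {u v : V}
    (hadj : H.Adj u v) : (u ∈ P ∧ v ∈ P) ∨ (u ∈ Q ∧ v ∈ Q) := by
  have hu : u ∈ P ∨ u ∈ Q := by
    have h0 := hadj.fst_mem
    rw [← h.1] at h0
    simpa using h0
  have hv : v ∈ P ∨ v ∈ Q := by
    have h0 := hadj.snd_mem
    rw [← h.1] at h0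
    simpa using h0
  have h1 := h.2 u v hadj
  have h2 := h.2 v u hadj.symm
  simp only [Finset.mem_sdiff, not_and, and_imp] at h1 h2
  tauto

lemma sepOf_top_cases {X Y : Finset V} (h : SepOf (⊤ : G.Subgraph) X Y) {u v : V}
    (hadj : G.Adj u v) : (u ∈ X ∧ v ∈ X) ∨ (u ∈ Y ∧ v ∈ Y) :=
  sepOf_cases h (SimpleGraph.Subgraph.top_adj.mpr hadj)

lemma sepOf_symm {H : G.Subgraph} {P Q : Finset V} (h : SepOf H P Q) : SepOf H Q P := by
  refine ⟨by rw [Set.union_comm]; exact h.1, fun u v hadj hc => ?_⟩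
  exact h.2 v u hadj.symm ⟨hc.2, hc.1⟩

lemma sepOf_top_union_eq {X Y : Finset V} (h : SepOf (⊤ : G.Subgraph) X Y) :
    (↑X ∪ ↑Y : Set V) = Set.univ := by
  rw [h.1, SimpleGraph.Subgraph.verts_top]

lemma gsep_of_sepOf {X Y : Finset V} (h : SepOf (⊤ : G.Subgraph) X Y) :
    IsGSep G (sepPair G X Y).1 (sepPair G X Y).2 := by
  constructor
  · apply SimpleGraph.Subgraph.ext
    · rw [SimpleGraph.Subgraph.verts_sup, sepPair_fst_verts, sepPair_snd_verts,
        SimpleGraph.Subgraph.verts_top]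
      exact sepOf_top_union_eq h
    · funext u v
      apply propext
      rw [SimpleGraph.Subgraph.sup_adj, SimpleGraph.Subgraph.top_adj]
      constructor
      · rintro (h' | h')
        · exact h'.adj_sub
        · exact h'.adj_sub
      · intro hadj
        by_cases hx : u ∈ X ∧ v ∈ X
        · exact Or.inl (sepPair_fst_adj.mpr ⟨hx.1, hx.2, hadj⟩)
        · rcases sepOf_top_cases h hadj with h' | h'
          · exact absurd h' hx
          · refine Or.inr (sepPair_snd_adj.mpr ⟨⟨h'.1, h'.2, hadj⟩, fun hc => ?_⟩)
            exact hx ⟨(Finset.mem_inter.mp hc.1).1, (Finset.mem_inter.mp hc.2).1⟩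
  · refine Set.eq_empty_iff_forall_notMem.mpr fun e => ?_
    induction e using Sym2.ind with
    | _ u v =>
      rintro ⟨h1, h2⟩
      rw [SimpleGraph.Subgraph.mem_edgeSet, sepPair_fst_adj] at h1
      rw [SimpleGraph.Subgraph.mem_edgeSet, sepPair_snd_adj] at h2
      exact h2.2 ⟨Finset.mem_inter.mpr ⟨h1.1, h2.1.1⟩, Finset.mem_inter.mpr ⟨h1.2.1, h2.1.2.1⟩⟩

lemma sepPair_order (X Y : Finset V) :
    ((sepPair G X Y).1.verts ∩ (sepPair G X Y).2.verts).ncard = (X ∩ Y).card := by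
  rw [sepPair_fst_verts, sepPair_snd_verts, ← Finset.coe_inter, Set.ncard_coe_finset]
lemma small_mem (hT : IsTangle G T θ) {S : Finset V} (hS : S.card < θ) :
    sepPair G S Finset.univ ∈ T := by
  have hsep : SepOf (⊤ : G.Subgraph) S Finset.univ := by
    refine ⟨by simp [SimpleGraph.Subgraph.verts_top], fun u v _ hc => ?_⟩
    have := hc.1
    simp [Finset.mem_sdiff] at this
  have hg := gsep_of_sepOf hsep
  rcases hT.2.2.1 _ _ hg (by rw [sepPair_order]; simpa using hS) with h | h
  · exact h
  · exact absurd (by rw [sepPair_snd_verts]; exact Finset.coe_univ)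
      (hT.2.2.2.2 _ h)

lemma force (hT : IsTangle G T θ) {p₁ p₂ : G.Subgraph × G.Subgraph} (hp₁ : p₁ ∈ T)
    (hp₂ : p₂ ∈ T) {X' Y' : Finset V} (hsep' : SepOf (⊤ : G.Subgraph) X' Y')
    (hord : (X' ∩ Y').card < θ)
    (hv : p₁.1.verts ∪ p₂.1.verts ∪ (↑Y' : Set V) = Set.univ)
    (he : ∀ u v, G.Adj u v → p₁.1.Adj u v ∨ p₂.1.Adj u v ∨
        ((u ∈ Y' ∧ v ∈ Y') ∧ ¬(u ∈ X' ∩ Y' ∧ v ∈ X' ∩ Y'))) :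
    sepPair G X' Y' ∈ T := by
  have hg := gsep_of_sepOf hsep'
  rcases hT.2.2.1 _ _ hg (by rw [sepPair_order]; exact hord) with h | h
  · exact h
  · exfalso
    apply hT.2.2.2.1 p₁ hp₁ p₂ hp₂ _ h
    apply SimpleGraph.Subgraph.ext
    · rw [SimpleGraph.Subgraph.verts_sup, SimpleGraph.Subgraph.verts_sup,
        SimpleGraph.Subgraph.verts_top]
      show p₁.1.verts ∪ p₂.1.verts ∪ (sepPair G X' Y').2.verts = _
      rw [sepPair_snd_verts]
      exact hv
    · funext u v
      apply propext
      rw [SimpleGraph.Subgraph.sup_adj, SimpleGraph.Subgraph.sup_adj,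
        SimpleGraph.Subgraph.top_adj]
      constructor
      · rintro ((h' | h') | h')
        · exact h'.adj_sub
        · exact h'.adj_sub
        · exact h'.adj_sub
      · intro hadj
        rcases he u v hadj with h' | h' | h'
        · exact Or.inl (Or.inl h')
        · exact Or.inl (Or.inr h')
        · exact Or.inr (show (sepPair G X' Y').2.Adj u v from
            sepPair_snd_adj.mpr ⟨⟨h'.1.1, h'.1.2, hadj⟩, h'.2⟩)

lemma sepOf_extend {X Y P Q : Finset V} (hXY : SepOf (⊤ : G.Subgraph) X Y)
    (hPQ : SepOf ((⊤ : G.Subgraph).induce ↑Y) P Q) :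
    SepOf (⊤ : G.Subgraph) (X ∪ P) Q := by
  have hPQv : (↑P ∪ ↑Q : Set V) = ↑Y := hPQ.1
  have hQY : Q ⊆ Y := fun x hx => by
    have : (x : V) ∈ (↑P ∪ ↑Q : Set V) := Or.inr hx
    rw [hPQv] at this; exact this
  have hPY : P ⊆ Y := fun x hx => by
    have : (x : V) ∈ (↑P ∪ ↑Q : Set V) := Or.inl hx
    rw [hPQv] at this; exact this
  constructor
  · rw [Finset.coe_union, Set.union_assoc, hPQv]
    exact hXY.1
  · rintro u v hadj ⟨hu, hv⟩
    rw [Finset.mem_sdiff, Finset.mem_union] at hu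
    rw [Finset.mem_sdiff, Finset.mem_union] at hv
    have hadj' : G.Adj u v := (SimpleGraph.Subgraph.top_adj).mp hadj
    have hvY : v ∈ Y := hQY hv.1
    have hvnP : v ∉ P := fun hc => hv.2 (Or.inr hc)
    by_cases huY : u ∈ Y
    · have huP : u ∈ P := by
        have : u ∈ P ∨ u ∈ Q := by
          have h0 : (u : V) ∈ (↑P ∪ ↑Q : Set V) := by rw [hPQv]; exact huY
          simpa using h0
        rcases this with h' | h'
        · exact h'
        · exact absurd h' hu.2
      refine hPQ.2 u v ?_ ⟨Finset.mem_sdiff.mpr ⟨huP, hu.2⟩, Finset.mem_sdiff.mpr ⟨hv.1, hvnP⟩⟩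
      rw [SimpleGraph.Subgraph.induce_adj]
      exact ⟨huY, hvY, SimpleGraph.Subgraph.top_adj.mpr hadj'⟩
    · have huX : u ∈ X := by
        rcases hu.1 with h' | h'
        · exact h'
        · exact absurd (hPY h') huY
      have hvnX : v ∉ X := fun hc => hv.2 (Or.inl hc)
      exact hXY.2 u v hadj ⟨Finset.mem_sdiff.mpr ⟨huX, huY⟩, Finset.mem_sdiff.mpr ⟨hvY, hvnX⟩⟩
lemma step_lemma {a : ℕ}
    (hsep : ∀ H : G.Subgraph, ∃ A B : Finset V, BalancedSepOf H A B ∧ (A ∩ B).card ≤ a)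
    (hT : IsTangle G T θ) {Xc Yc : Finset V} (h1 : SepOf (⊤ : G.Subgraph) Xc Yc)
    (h2 : sepPair G Xc Yc ∈ T) (h3 : (Xc ∩ Yc).card + a < θ) :
    ∃ X' Y' : Finset V, SepOf (⊤ : G.Subgraph) X' Y' ∧ sepPair G X' Y' ∈ T ∧
      (X' ∩ Y').card ≤ (Xc ∩ Yc).card + a ∧ 3 * Y'.card ≤ 2 * Yc.card + 3 * a := by
  obtain ⟨P, Q, ⟨hPQ, hbP, hbQ⟩, hPQa⟩ := hsep ((⊤ : G.Subgraph).induce ↑Yc)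
  have hPQv : (↑P ∪ ↑Q : Set V) = (↑Yc : Set V) := hPQ.1
  have hQY : Q ⊆ Yc := fun x hx => by
    have h0 : (x : V) ∈ (↑P ∪ ↑Q : Set V) := Or.inr hx
    rw [hPQv] at h0; exact h0
  have hPY : P ⊆ Yc := fun x hx => by
    have h0 : (x : V) ∈ (↑P ∪ ↑Q : Set V) := Or.inl hx
    rw [hPQv] at h0; exact h0
  simp only [SimpleGraph.Subgraph.induce_verts, Set.ncard_coe_finset] at hbP hbQ
  have hQc : 3 * Q.card ≤ 2 * Yc.card + 3 * a := by
    have h0 := Finset.card_sdiff_add_card_inter Q P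
    have h1' : (Q ∩ P).card ≤ a := by rw [Finset.inter_comm]; exact hPQa
    omega
  have hPc : 3 * P.card ≤ 2 * Yc.card + 3 * a := by
    have h0 := Finset.card_sdiff_add_card_inter P Q
    omega
  have hScard : (Xc ∩ Yc ∪ P ∩ Q).card ≤ (Xc ∩ Yc).card + a :=
    le_trans (Finset.card_union_le _ _) (by omega)
  have hordS : (Xc ∩ Yc ∪ P ∩ Q).card < θ := lt_of_le_of_lt hScard h3
  have hSmem : sepPair G (Xc ∩ Yc ∪ P ∩ Q) Finset.univ ∈ T := small_mem hT hordS
  have hadjPQ : ∀ u v : V, u ∈ Yc → v ∈ Yc → G.Adj u v →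
      (u ∈ P ∧ v ∈ P) ∨ (u ∈ Q ∧ v ∈ Q) := by
    intro u v hu hv h
    refine sepOf_cases hPQ ?_
    rw [SimpleGraph.Subgraph.induce_adj]
    exact ⟨hu, hv, SimpleGraph.Subgraph.top_adj.mpr h⟩
  have hsepS : SepOf (⊤ : G.Subgraph) (Xc ∪ P ∩ Q) Yc := by
    constructor
    · have hsub : (↑(P ∩ Q) : Set V) ⊆ (↑Yc : Set V) := by
        intro x hx
        exact Finset.mem_coe.mpr (hQY (Finset.mem_inter.mp (Finset.mem_coe.mp hx)).2)
      rw [Finset.coe_union, Set.union_assoc, Set.union_eq_self_of_subset_left hsub]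
      exact h1.1
    · rintro u v hadj ⟨hu, hv⟩
      rw [Finset.mem_sdiff, Finset.mem_union] at hu hv
      have huX : u ∈ Xc := by
        rcases hu.1 with h' | h'
        · exact h'
        · exact absurd (hQY (Finset.mem_inter.mp h').2) hu.2
      exact h1.2 u v hadj ⟨Finset.mem_sdiff.mpr ⟨huX, hu.2⟩,
        Finset.mem_sdiff.mpr ⟨hv.1, fun hc => hv.2 (Or.inl hc)⟩⟩
  have hSint : (Xc ∪ P ∩ Q) ∩ Yc ⊆ Xc ∩ Yc ∪ P ∩ Q := by
    intro x hx
    rw [Finset.mem_inter, Finset.mem_union] at hx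
    rcases hx.1 with h' | h'
    · exact Finset.mem_union_left _ (Finset.mem_inter.mpr ⟨h', hx.2⟩)
    · exact Finset.mem_union_right _ h'
  have hmemS : sepPair G (Xc ∪ P ∩ Q) Yc ∈ T := by
    refine force hT h2 hSmem hsepS
      (lt_of_le_of_lt (le_trans (Finset.card_le_card hSint) hScard) h3) ?_ ?_
    · rw [sepPair_fst_verts, sepPair_fst_verts]
      apply Set.eq_univ_of_univ_subset
      rw [← sepOf_top_union_eq h1]
      rintro x (hx | hx)
      · exact Or.inl (Or.inl hx)
      · exact Or.inr hx
    · intro u v hadj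
      rcases sepOf_top_cases h1 hadj with h' | h'
      · exact Or.inl (sepPair_fst_adj.mpr ⟨h'.1, h'.2, hadj⟩)
      · by_cases hb : u ∈ Xc ∩ Yc ∪ P ∩ Q ∧ v ∈ Xc ∩ Yc ∪ P ∩ Q
        · exact Or.inr (Or.inl (sepPair_fst_adj.mpr ⟨hb.1, hb.2, hadj⟩))
        · exact Or.inr (Or.inr ⟨h', fun hc => hb ⟨hSint hc.1, hSint hc.2⟩⟩)
  have hsep₁ : SepOf (⊤ : G.Subgraph) (Xc ∪ P) Q := sepOf_extend h1 hPQ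
  have hsep₂ : SepOf (⊤ : G.Subgraph) (Xc ∪ Q) P := sepOf_extend h1 (sepOf_symm hPQ)
  have hint₁ : (Xc ∪ P) ∩ Q ⊆ Xc ∩ Yc ∪ P ∩ Q := by
    intro x hx
    rw [Finset.mem_inter, Finset.mem_union] at hx
    rcases hx.1 with h' | h'
    · exact Finset.mem_union_left _ (Finset.mem_inter.mpr ⟨h', hQY hx.2⟩)
    · exact Finset.mem_union_right _ (Finset.mem_inter.mpr ⟨h', hx.2⟩)
  have hint₂ : (Xc ∪ Q) ∩ P ⊆ Xc ∩ Yc ∪ P ∩ Q := by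
    intro x hx
    rw [Finset.mem_inter, Finset.mem_union] at hx
    rcases hx.1 with h' | h'
    · exact Finset.mem_union_left _ (Finset.mem_inter.mpr ⟨h', hPY hx.2⟩)
    · exact Finset.mem_union_right _ (Finset.mem_inter.mpr ⟨hx.2, h'⟩)
  rcases hT.2.2.1 _ _ (gsep_of_sepOf hsep₁)
      (by rw [sepPair_order]; exact lt_of_le_of_lt (Finset.card_le_card hint₁) hordS)
    with hg₁ | hg₁
  · exact ⟨Xc ∪ P, Q, hsep₁, hg₁,
      le_trans (Finset.card_le_card hint₁) hScard, hQc⟩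
  rcases hT.2.2.1 _ _ (gsep_of_sepOf hsep₂)
      (by rw [sepPair_order]; exact lt_of_le_of_lt (Finset.card_le_card hint₂) hordS)
    with hg₂ | hg₂
  · exact ⟨Xc ∪ Q, P, hsep₂, hg₂,
      le_trans (Finset.card_le_card hint₂) hScard, hPc⟩
  exfalso
  apply hT.2.2.2.1 _ hg₁ _ hg₂ _ hmemS
  apply SimpleGraph.Subgraph.ext
  · rw [SimpleGraph.Subgraph.verts_sup, SimpleGraph.Subgraph.verts_sup,
      SimpleGraph.Subgraph.verts_top]
    show (sepPair G (Xc ∪ P) Q).2.verts ∪ (sepPair G (Xc ∪ Q) P).2.verts ∪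
        (sepPair G (Xc ∪ P ∩ Q) Yc).1.verts = Set.univ
    rw [sepPair_snd_verts, sepPair_snd_verts, sepPair_fst_verts]
    apply Set.eq_univ_of_univ_subset
    rw [← sepOf_top_union_eq h1]
    rintro x (hx | hx)
    · exact Or.inr (Finset.mem_coe.mpr (Finset.mem_union_left _ (Finset.mem_coe.mp hx)))
    · rcases (by
        have h0 : (x : V) ∈ (↑P ∪ ↑Q : Set V) := by rw [hPQv]; exact hx
        simpa using h0 : x ∈ P ∨ x ∈ Q) with h' | h'
      · exact Or.inl (Or.inr (Finset.mem_coe.mpr h'))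
      · exact Or.inl (Or.inl (Finset.mem_coe.mpr h'))
  · funext u v
    apply propext
    rw [SimpleGraph.Subgraph.sup_adj, SimpleGraph.Subgraph.sup_adj,
      SimpleGraph.Subgraph.top_adj]
    constructor
    · rintro ((h' | h') | h')
      · exact h'.adj_sub
      · exact h'.adj_sub
      · exact h'.adj_sub
    · intro hadj
      rcases sepOf_top_cases h1 hadj with h' | h'
      · exact Or.inr (show (sepPair G (Xc ∪ P ∩ Q) Yc).1.Adj u v from
          sepPair_fst_adj.mpr ⟨Finset.mem_union_left _ h'.1, Finset.mem_union_left _ h'.2, hadj⟩)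
      · rcases hadjPQ u v h'.1 h'.2 hadj with hp | hq
        · by_cases hb : u ∈ (Xc ∪ Q) ∩ P ∧ v ∈ (Xc ∪ Q) ∩ P
          · refine Or.inr (show (sepPair G (Xc ∪ P ∩ Q) Yc).1.Adj u v from
              sepPair_fst_adj.mpr ⟨?_, ?_, hadj⟩)
            · rcases Finset.mem_union.mp (Finset.mem_inter.mp hb.1).1 with h'' | h''
              · exact Finset.mem_union_left _ h''
              · exact Finset.mem_union_right _ (Finset.mem_inter.mpr ⟨hp.1, h''⟩)
            · rcases Finset.mem_union.mp (Finset.mem_inter.mp hb.2).1 with h'' | h''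
              · exact Finset.mem_union_left _ h''
              · exact Finset.mem_union_right _ (Finset.mem_inter.mpr ⟨hp.2, h''⟩)
          · exact Or.inl (Or.inr (show (sepPair G (Xc ∪ Q) P).2.Adj u v from
              sepPair_snd_adj.mpr ⟨⟨hp.1, hp.2, hadj⟩, hb⟩))
        · by_cases hb : u ∈ (Xc ∪ P) ∩ Q ∧ v ∈ (Xc ∪ P) ∩ Q
          · refine Or.inr (show (sepPair G (Xc ∪ P ∩ Q) Yc).1.Adj u v from
              sepPair_fst_adj.mpr ⟨?_, ?_, hadj⟩)
            · rcases Finset.mem_union.mp (Finset.mem_inter.mp hb.1).1 with h'' | h''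
              · exact Finset.mem_union_left _ h''
              · exact Finset.mem_union_right _ (Finset.mem_inter.mpr ⟨h'', hq.1⟩)
            · rcases Finset.mem_union.mp (Finset.mem_inter.mp hb.2).1 with h'' | h''
              · exact Finset.mem_union_left _ h''
              · exact Finset.mem_union_right _ (Finset.mem_inter.mpr ⟨h'', hq.2⟩)
          · exact Or.inl (Or.inl (show (sepPair G (Xc ∪ P) Q).2.Adj u v from
              sepPair_snd_adj.mpr ⟨⟨hq.1, hq.2, hadj⟩, hb⟩))
lemma iter_lemma {a : ℕ}
    (hsep : ∀ H : G.Subgraph, ∃ A B : Finset V, BalancedSepOf H A B ∧ (A ∩ B).card ≤ a)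
    (hT : IsTangle G T θ) (hθ : 70 * a + 1 ≤ θ) :
    ∀ k, k ≤ 8 → ∀ X₀ Y₀ : Finset V, SepOf (⊤ : G.Subgraph) X₀ Y₀ →
      sepPair G X₀ Y₀ ∈ T → (X₀ ∩ Y₀).card ≤ 60 * a →
      ∃ X' Y' : Finset V, SepOf (⊤ : G.Subgraph) X' Y' ∧ sepPair G X' Y' ∈ T ∧
        (X' ∩ Y').card ≤ 60 * a + k * a ∧
        3 ^ k * Y'.card + 3 * a * 2 ^ k ≤ 2 ^ k * Y₀.card + 3 * a * 3 ^ k := by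
  intro k
  induction k with
  | zero =>
    intro _ X₀ Y₀ hs hm hc
    exact ⟨X₀, Y₀, hs, hm, by simpa using hc, by simp⟩
  | succ k ih =>
    intro hk X₀ Y₀ hs hm hc
    obtain ⟨X₁, Y₁, hs₁, hm₁, hc₁, hz₁⟩ := ih (by omega) X₀ Y₀ hs hm hc
    have hka : k * a ≤ 7 * a := Nat.mul_le_mul_right a (by omega)
    have h3 : (X₁ ∩ Y₁).card + a < θ := by omega
    obtain ⟨X₂, Y₂, hs₂, hm₂, hc₂, hz₂⟩ := step_lemma hsep hT hs₁ hm₁ h3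
    refine ⟨X₂, Y₂, hs₂, hm₂, ?_, ?_⟩
    · have he : 60 * a + k * a + a = 60 * a + (k + 1) * a := by ring
      exact le_trans (le_trans hc₂ (Nat.add_le_add_right hc₁ a)) (le_of_eq he)
    · have e1 : 3 ^ (k + 1) * Y₂.card ≤ 3 ^ k * (2 * Y₁.card + 3 * a) := by
        calc 3 ^ (k + 1) * Y₂.card = 3 ^ k * (3 * Y₂.card) := by ring
          _ ≤ 3 ^ k * (2 * Y₁.card + 3 * a) := Nat.mul_le_mul_left _ hz₂
      have e2 : 2 * (3 ^ k * Y₁.card + 3 * a * 2 ^ k) ≤ 2 * (2 ^ k * Y₀.card + 3 * a * 3 ^ k) :=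
        Nat.mul_le_mul_left _ hz₁
      calc 3 ^ (k + 1) * Y₂.card + 3 * a * 2 ^ (k + 1)
          ≤ 3 ^ k * (2 * Y₁.card + 3 * a) + 3 * a * 2 ^ (k + 1) := Nat.add_le_add_right e1 _
        _ = 2 * (3 ^ k * Y₁.card + 3 * a * 2 ^ k) + 3 * a * 3 ^ k := by ring
        _ ≤ 2 * (2 ^ k * Y₀.card + 3 * a * 3 ^ k) + 3 * a * 3 ^ k := Nat.add_le_add_right e2 _
        _ = 2 ^ (k + 1) * Y₀.card + 3 * a * 3 ^ (k + 1) := by ring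

set_option maxHeartbeats 1000000
set_option maxRecDepth 4000

/-- If `(X, Y) ∈ T` is a separation of order at most `70a` with `|Y|` minimal and
`G[X]` has a `(3|Y|, 1/7)`-skewed separation with respect to `W = X ∩ Y`, then there
is a separation `(X', Y') ∈ T` of order at most `68a` with `|Y'| < |Y|`, contradicting
the minimality of `|Y|`. -/
theorem skewed_contradicts_minimality (G : SimpleGraph V) (a : ℕ) (ha : 1 ≤ a)
    (hsep : ∀ H : G.Subgraph, ∃ A B : Finset V, BalancedSepOf H A B ∧ (A ∩ B).card ≤ a)
    (T : Set (G.Subgraph × G.Subgraph)) (θ : ℕ) (hθ : 70 * a + 1 ≤ θ)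
    (hT : IsTangle G T θ)
    (X Y : Finset V) (hXY : SepOf (⊤ : G.Subgraph) X Y)
    (hord : (X ∩ Y).card ≤ 70 * a)
    (hmem : sepPair G X Y ∈ T)
    (hmin : ∀ X' Y' : Finset V, SepOf (⊤ : G.Subgraph) X' Y' →
      (X' ∩ Y').card ≤ 70 * a → sepPair G X' Y' ∈ T → Y.card ≤ Y'.card)
    (A B : Finset V)
    (hskew : SkewedSepOf ((⊤ : G.Subgraph).induce ↑X) (X ∩ Y) A B
        (3 * (Y.card : ℝ)) (1 / 7)) :
    ∃ X' Y' : Finset V, SepOf (⊤ : G.Subgraph) X' Y' ∧ (X' ∩ Y').card ≤ 68 * a ∧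
      sepPair G X' Y' ∈ T ∧ Y'.card < Y.card := by
  
  obtain ⟨hsAB, hWA, hA18r, hABr⟩ := hskew
  have hXuniv : (↑X ∪ ↑Y : Set V) = Set.univ := sepOf_top_union_eq hXY
  have hABcoe : (↑A ∪ ↑B : Set V) = (↑X : Set V) := hsAB.1
  have hABX : A ∪ B = X := by
    apply Finset.coe_injective
    rw [Finset.coe_union]; exact hABcoe
  have hAX : A ⊆ X := by rw [← hABX]; exact Finset.subset_union_left
  have hBX : B ⊆ X := by rw [← hABX]; exact Finset.subset_union_right
  have hA18 : A.card ≤ 18 * Y.card := by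
    have h0 : (A.card : ℝ) ≤ ((18 * Y.card : ℕ) : ℝ) := by push_cast; linarith
    exact_mod_cast h0
  have hAB60 : (A ∩ B).card ≤ 60 * a := by
    have h1 : ((X ∩ Y).card : ℝ) ≤ ((70 * a : ℕ) : ℝ) := by exact_mod_cast hord
    have h0 : ((A ∩ B).card : ℝ) ≤ ((60 * a : ℕ) : ℝ) := by
      push_cast at h1 ⊢
      nlinarith
    exact_mod_cast h0
  -- |Y| is at least 70a+1
  have hY70 : 70 * a + 1 ≤ Y.card := by
    by_contra hcon
    push_neg at hcon
    have hsmall : sepPair G Y Finset.univ ∈ T := small_mem hT (by omega)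
    apply hT.2.2.2.1 _ hmem _ hsmall _ hsmall
    apply SimpleGraph.Subgraph.ext
    · rw [SimpleGraph.Subgraph.verts_sup, SimpleGraph.Subgraph.verts_sup,
        SimpleGraph.Subgraph.verts_top]
      show (sepPair G X Y).1.verts ∪ (sepPair G Y Finset.univ).1.verts ∪
          (sepPair G Y Finset.univ).1.verts = Set.univ
      rw [sepPair_fst_verts, sepPair_fst_verts]
      apply Set.eq_univ_of_univ_subset
      rw [← hXuniv]
      rintro x (hx | hx)
      · exact Or.inl (Or.inl hx)
      · exact Or.inr hx
    · funext u v
      apply propext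
      rw [SimpleGraph.Subgraph.sup_adj, SimpleGraph.Subgraph.sup_adj,
        SimpleGraph.Subgraph.top_adj]
      constructor
      · rintro ((h' | h') | h')
        · exact h'.adj_sub
        · exact h'.adj_sub
        · exact h'.adj_sub
      · intro hadj
        rcases sepOf_top_cases hXY hadj with h' | h'
        · exact Or.inl (Or.inl (sepPair_fst_adj.mpr ⟨h'.1, h'.2, hadj⟩))
        · exact Or.inr (show (sepPair G Y Finset.univ).1.Adj u v from
            sepPair_fst_adj.mpr ⟨h'.1, h'.2, hadj⟩)
  -- the starting pair (B, A ∪ Y)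
  have hsep₀ : SepOf (⊤ : G.Subgraph) B (A ∪ Y) := by
    constructor
    · rw [SimpleGraph.Subgraph.verts_top, Finset.coe_union, ← Set.union_assoc,
        Set.union_comm (↑B : Set V) (↑A : Set V), hABcoe]
      exact hXuniv
    · rintro u v hadj ⟨hu, hv⟩
      rw [Finset.mem_sdiff, Finset.mem_union] at hu
      rw [Finset.mem_sdiff, Finset.mem_union] at hv
      have huX : u ∈ X := hBX hu.1
      by_cases hvA : v ∈ A
      · refine hsAB.2 v u ?_ ⟨Finset.mem_sdiff.mpr ⟨hvA, hv.2⟩,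
          Finset.mem_sdiff.mpr ⟨hu.1, fun h => hu.2 (Or.inl h)⟩⟩
        rw [SimpleGraph.Subgraph.induce_adj]
        exact ⟨hAX hvA, huX, SimpleGraph.Subgraph.top_adj.mpr hadj.symm⟩
      · have hvY : v ∈ Y := by
          rcases hv.1 with h' | h'
          · exact absurd h' hvA
          · exact h'
        have hvnX : v ∉ X := fun hc => hvA (hWA (Finset.mem_inter.mpr ⟨hc, hvY⟩))
        have hunY : u ∉ Y := fun hc => hu.2 (Or.inr hc)
        exact hXY.2 u v hadj ⟨Finset.mem_sdiff.mpr ⟨huX, hunY⟩,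
          Finset.mem_sdiff.mpr ⟨hvY, hvnX⟩⟩
  have hint₀ : B ∩ (A ∪ Y) ⊆ A ∩ B := by
    intro x hx
    rw [Finset.mem_inter, Finset.mem_union] at hx
    rcases hx.2 with h' | h'
    · exact Finset.mem_inter.mpr ⟨h', hx.1⟩
    · exact Finset.mem_inter.mpr ⟨hWA (Finset.mem_inter.mpr ⟨hBX hx.1, h'⟩), hx.1⟩
  have hord₀ : (B ∩ (A ∪ Y)).card ≤ 60 * a := le_trans (Finset.card_le_card hint₀) hAB60
  have hmem₀ : sepPair G B (A ∪ Y) ∈ T := by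
    refine force hT hmem hmem hsep₀ (by omega) ?_ ?_
    · rw [sepPair_fst_verts]
      apply Set.eq_univ_of_univ_subset
      rw [← hXuniv]
      rintro x (hx | hx)
      · exact Or.inl (Or.inl hx)
      · exact Or.inr (Finset.mem_coe.mpr (Finset.mem_union_right _ (Finset.mem_coe.mp hx)))
    · intro u v hadj
      rcases sepOf_top_cases hXY hadj with h' | h'
      · exact Or.inl (sepPair_fst_adj.mpr ⟨h'.1, h'.2, hadj⟩)
      · by_cases hb : u ∈ X ∧ v ∈ X
        · exact Or.inl (sepPair_fst_adj.mpr ⟨hb.1, hb.2, hadj⟩)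
        · refine Or.inr (Or.inr ⟨⟨Finset.mem_union_right _ h'.1, Finset.mem_union_right _ h'.2⟩,
            fun hc => hb ⟨hBX (Finset.mem_inter.mp hc.1).1, hBX (Finset.mem_inter.mp hc.2).1⟩⟩)
  obtain ⟨X', Y', hs', hm', hc', hz'⟩ :=
    iter_lemma hsep hT hθ 8 le_rfl B (A ∪ Y) hsep₀ hmem₀ hord₀
  refine ⟨X', Y', hs', by omega, hm', ?_⟩
  have hAuY : (A ∪ Y).card ≤ 19 * Y.card :=
    le_trans (Finset.card_union_le _ _) (by omega)
  have e3 : (3 : ℕ) ^ 8 = 6561 := by norm_num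
  have e2 : (2 : ℕ) ^ 8 = 256 := by norm_num
  rw [e3, e2] at hz'
  omega
end

section
/- Let F be a finite graph, Y ⊆ V(F), W ⊆ Y, and let H be a strongly (3|Y|, 1/35)-tame W-cloud with F = F[Y] ∪ H, where |W| = 70a for an integer a ≥ 1. Let (A,B) be a separation of F of order at most a with |A ∩ W| ≤ a. Then |B \ A| ≥ (3/4)|V(F)| > (2/3)|V(F)|; in particular, (A,B) is not a balanced separation of F. -/
open Finset

universe u

variable {V : Type u} [Fintype V] [DecidableEq V]

/-! ### Auxiliary lemmas -/

lemma creach_symm {G : SimpleGraph V} {H : G.Subgraph} {u v : V}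
    (h : CReach H u v) : CReach H v u := by
  obtain ⟨hu, hv, hr⟩ := h
  exact ⟨hv, hu, hr.symm⟩

lemma creach_mem_left {G : SimpleGraph V} {H : G.Subgraph} {u v : V}
    (h : CReach H u v) : u ∈ H.verts := h.1

lemma creach_mem_right {G : SimpleGraph V} {H : G.Subgraph} {u v : V}
    (h : CReach H u v) : v ∈ H.verts := h.2.1

lemma creach_refl {G : SimpleGraph V} {H : G.Subgraph} {u : V}
    (hu : u ∈ H.verts) : CReach H u u := ⟨hu, hu, SimpleGraph.Reachable.refl _⟩

lemma creach_trans {G : SimpleGraph V} {H : G.Subgraph} {u v x : V}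
    (h1 : CReach H u v) (h2 : CReach H v x) : CReach H u x := by
  obtain ⟨hu, hv, hr1⟩ := h1
  obtain ⟨hv', hx, hr2⟩ := h2
  exact ⟨hu, hx, hr1.trans hr2⟩

lemma cloud_comp_disjoint {G : SimpleGraph V} {W : Finset V} {H : G.Subgraph}
    (hc : IsCloud G W H) {w w' : V} (hw : w ∈ W) (hw' : w' ∈ W) (hne : w ≠ w') :
    Disjoint (cloudComp H w) (cloudComp H w') := by
  rw [Set.disjoint_left]
  intro v hv hv'
  have hvv : v ∈ H.verts := creach_mem_right hv
  obtain ⟨z, _, huniq⟩ := hc.2.2 v hvv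
  exact hne ((huniq w ⟨hw, creach_symm hv⟩).trans (huniq w' ⟨hw', creach_symm hv'⟩).symm)

/-- If a walk goes from outside `A` into `A`, and no edge goes between `A \ B` and
`B \ A`, and `A ∪ B` covers everything, then the walk contains a vertex of `A ∩ B`. -/
lemma walk_cross {T : Type*} {G : SimpleGraph T} {A B : Set T}
    (hsep : ∀ u v, G.Adj u v → u ∈ A → u ∉ B → v ∈ B → v ∉ A → False)
    (hcov : ∀ v, v ∈ A ∨ v ∈ B) {u v : T} (p : G.Walk u v)
    (hu : u ∉ A) (hv : v ∈ A) : ∃ x ∈ p.support, x ∈ A ∧ x ∈ B := by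
  revert hu
  induction p with
  | nil => exact fun hu => absurd hv hu
  | @cons u x v h p ih =>
    intro hu
    by_cases hxA : x ∈ A
    · by_cases hxB : x ∈ B
      · exact ⟨x, by simp, hxA, hxB⟩
      · have huB : u ∈ B := (hcov u).resolve_left hu
        exact (hsep x u h.symm hxA hxB huB hu).elim
    · obtain ⟨y, hy, hyA, hyB⟩ := ih hv hxA
      exact ⟨y, by simp [hy], hyA, hyB⟩

/-- If `F = F[Y] ∪ H` for a strongly `(3|Y|, 1/35)`-tame `W`-cloud `H` with `W ⊆ Y` and
`|W| = 70a`, then any separation `(A, B)` of `F` of order at most `a` with `|A ∩ W| ≤ a`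
satisfies `|B \ A| ≥ (3/4)|V(F)| > (2/3)|V(F)|`; in particular it is not balanced. -/
theorem big_side_of_separation (F : SimpleGraph V) (a : ℕ) (ha : 1 ≤ a)
    (Y W : Finset V) (hWY : W ⊆ Y) (hWcard : W.card = 70 * a)
    (H : F.Subgraph)
    (hH : IsStronglyTameCloud F W H (3 * (Y.card : ℝ)) (1 / 35))
    (hF : (⊤ : F.Subgraph).induce ↑Y ⊔ H = ⊤)
    (A B : Finset V) (hAB : SepOf (⊤ : F.Subgraph) A B)
    (hord : (A ∩ B).card ≤ a) (hAW : (A ∩ W).card ≤ a) :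
    ((3 : ℝ) / 4) * (Fintype.card V : ℝ) ≤ ((B \ A).card : ℝ) ∧
    ((2 : ℝ) / 3) * (Fintype.card V : ℝ) < ((B \ A).card : ℝ) ∧
    ¬ BalancedSepOf (⊤ : F.Subgraph) A B := by
  classical
  obtain ⟨hcloud, htame⟩ := hH
  obtain ⟨hcovEq, hsep⟩ := hAB
  -- everything is covered by A ∪ B
  have hcov : ∀ v : V, v ∈ A ∨ v ∈ B := by
    intro v
    have : v ∈ (↑A ∪ ↑B : Set V) := by
      rw [hcovEq, SimpleGraph.Subgraph.verts_top]; trivial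
    simpa using this
  -- V = Y ∪ H.verts
  have hvertsEq : (↑Y : Set V) ∪ H.verts = Set.univ := by
    have := congrArg SimpleGraph.Subgraph.verts hF
    rw [SimpleGraph.Subgraph.verts_sup, SimpleGraph.Subgraph.verts_top] at this
    exact this
  -- the finset of a cloud component
  set toF : V → Finset V := fun w => (cloudComp H w).toFinset with htoF
  have htoFcard : ∀ w, (cloudComp H w).ncard = (toF w).card := fun w =>
    Set.ncard_eq_toFinset_card' _
  -- U : components avoiding A
  set U : Finset V := W.filter (fun w => ∀ v ∈ cloudComp H w, v ∉ A) with hU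
  have hUW : U ⊆ W := filter_subset _ _
  -- The injection bounding |W \ U|
  have hWUcard : (W \ U).card ≤ 2 * a := by
    set f : V → V := fun w =>
      if w ∈ A then w
      else if hx : ∃ x, x ∈ cloudComp H w ∧ x ∈ A ∧ x ∈ B then hx.choose else w with hf
    have key : ∀ w ∈ W \ U, f w ∈ cloudComp H w ∧ f w ∈ (A ∩ W) ∪ (A ∩ B) := by
      intro w hw
      rw [mem_sdiff] at hw
      obtain ⟨hwW, hwU⟩ := hw
      have hwv : w ∈ H.verts := hcloud.2.1 hwW
      have hwc : w ∈ cloudComp H w := creach_refl hwv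
      by_cases hwA : w ∈ A
      · refine ⟨by simpa [hf, hwA] using hwc, ?_⟩
        simp [hf, hwA, mem_union, mem_inter, hwW]
      · -- the component meets A; find a crossing vertex in A ∩ B
        have hmeet : ∃ v ∈ cloudComp H w, v ∈ A := by
          by_contra hcon
          push_neg at hcon
          exact hwU (mem_filter.2 ⟨hwW, hcon⟩)
        obtain ⟨v, hvc, hvA⟩ := hmeet
        obtain ⟨hw', hv', hr⟩ := hvc
        obtain ⟨p⟩ := hr
        have hx : ∃ x, x ∈ cloudComp H w ∧ x ∈ A ∧ x ∈ B := by
          have hsep' : ∀ u v : H.verts, H.coe.Adj u v → (↑u : V) ∈ A → (↑u : V) ∉ B →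
              (↑v : V) ∈ B → (↑v : V) ∉ A → False := by
            intro u v huv huA huB hvB hvA'
            have hFA : F.Adj (↑u) (↑v) := huv.adj_sub
            exact hsep (↑u) (↑v) (SimpleGraph.Subgraph.top_adj.2 hFA)
              ⟨mem_sdiff.2 ⟨huA, huB⟩, mem_sdiff.2 ⟨hvB, hvA'⟩⟩
          have hcov' : ∀ x : H.verts, (↑x : V) ∈ A ∨ (↑x : V) ∈ B := fun x => hcov x
          obtain ⟨x, hxs, hxA, hxB⟩ :=
            walk_cross (A := {x : H.verts | (↑x : V) ∈ (↑A : Set V)})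
              (B := {x : H.verts | (↑x : V) ∈ (↑B : Set V)})
              (by intro u v huv hA hB hB' hA'; exact hsep' u v huv (by exact_mod_cast hA)
                    (by simpa using hB) (by exact_mod_cast hB') (by simpa using hA'))
              (by intro x; simpa using hcov' x) p (by simpa using hwA) (by simpa using hvA)
          refine ⟨(↑x : V), ⟨hw', x.2, ?_⟩, by simpa using hxA, by simpa using hxB⟩
          exact ⟨p.takeUntil x hxs⟩
        have hfw : f w = hx.choose := by simp [hf, hwA, hx]
        obtain ⟨h1, h2, h3⟩ := hx.choose_spec
        rw [hfw]
        exact ⟨h1, mem_union.2 (Or.inr (mem_inter.2 ⟨h2, h3⟩))⟩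
    have hinj : Set.InjOn f ↑(W \ U) := by
      intro w1 h1 w2 h2 heq
      by_contra hne
      have hd := cloud_comp_disjoint hcloud (mem_sdiff.1 (mem_coe.1 h1)).1
        (mem_sdiff.1 (mem_coe.1 h2)).1 hne
      exact Set.disjoint_left.1 hd (key w1 (mem_coe.1 h1)).1
        (heq ▸ (key w2 (mem_coe.1 h2)).1)
    calc (W \ U).card ≤ ((A ∩ W) ∪ (A ∩ B)).card :=
          Finset.card_le_card_of_injOn f (fun w hw => (key w hw).2) hinj
      _ ≤ (A ∩ W).card + (A ∩ B).card := card_union_le _ _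
      _ ≤ a + a := Nat.add_le_add hAW hord
      _ = 2 * a := (two_mul a).symm
  -- |U| ≥ 68a
  have hUcard : 68 * a ≤ U.card := by
    have h1 : (W \ U).card + U.card = W.card := by
      rw [Finset.card_sdiff_add_card_eq_card hUW]
    omega
  -- tameness applies
  have htameU : 3 * (Y.card : ℝ) + 3 * (cloudSize H (W \ U) : ℝ) ≤ (cloudSize H U : ℝ) := by
    apply htame U hUW
    have : (1 - 1/35 : ℝ) * (70 * a : ℕ) = (68 * a : ℕ) := by
      push_cast; ring
    rw [hWcard, this]
    exact_mod_cast hUcard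
  -- components of U sit inside B \ A
  have hsub : ∀ w ∈ U, toF w ⊆ B \ A := by
    intro w hw x hx
    have hxc : x ∈ cloudComp H w := by simpa [htoF] using hx
    have hxA : x ∉ A := (mem_filter.1 hw).2 x hxc
    exact mem_sdiff.2 ⟨(hcov x).resolve_left hxA, hxA⟩
  -- cloudSize H U ≤ |B \ A|
  have hUsize : cloudSize H U ≤ (B \ A).card := by
    have hdisj : ∀ w1 ∈ U, ∀ w2 ∈ U, w1 ≠ w2 → Disjoint (toF w1) (toF w2) := by
      intro w1 h1 w2 h2 hne
      exact Set.disjoint_toFinset.2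
        (cloud_comp_disjoint hcloud (hUW h1) (hUW h2) hne)
    calc cloudSize H U = ∑ w ∈ U, (toF w).card := by
          unfold cloudSize; exact Finset.sum_congr rfl (fun w _ => htoFcard w)
      _ = (U.biUnion toF).card := (Finset.card_biUnion hdisj).symm
      _ ≤ (B \ A).card := Finset.card_le_card (by
          intro x hx
          obtain ⟨w, hw, hxw⟩ := Finset.mem_biUnion.1 hx
          exact hsub w hw hxw)
  -- |V| ≤ |Y| + cloudSize H W
  have hVle : Fintype.card V ≤ Y.card + cloudSize H W := by
    have hcover : (Finset.univ : Finset V) ⊆ Y ∪ W.biUnion toF := by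
      intro v _
      have hv : v ∈ (↑Y : Set V) ∪ H.verts := hvertsEq ▸ Set.mem_univ v
      rcases hv with hv | hv
      · exact mem_union.2 (Or.inl (by exact_mod_cast hv))
      · obtain ⟨w, ⟨hwW, hwr⟩, _⟩ := hcloud.2.2 v hv
        refine mem_union.2 (Or.inr (Finset.mem_biUnion.2 ⟨w, hwW, ?_⟩))
        simp only [htoF, Set.mem_toFinset]
        exact creach_symm hwr
    calc Fintype.card V = (Finset.univ : Finset V).card := rfl
      _ ≤ (Y ∪ W.biUnion toF).card := Finset.card_le_card hcover
      _ ≤ Y.card + (W.biUnion toF).card := card_union_le _ _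
      _ ≤ Y.card + ∑ w ∈ W, (toF w).card :=
          Nat.add_le_add_left (Finset.card_biUnion_le) _
      _ = Y.card + cloudSize H W := by
          unfold cloudSize
          exact congrArg _ (Finset.sum_congr rfl (fun w _ => (htoFcard w).symm))
  -- cloudSize splits
  have hsplit : cloudSize H W = cloudSize H (W \ U) + cloudSize H U := by
    unfold cloudSize
    rw [Finset.sum_sdiff hUW]
  -- numeric conclusion
  have hN : (70 : ℕ) * a ≤ Fintype.card V := by
    rw [← hWcard]
    exact Finset.card_le_univ W
  have hNpos : (0 : ℝ) < (Fintype.card V : ℝ) := by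
    have : 0 < Fintype.card V := by omega
    exact_mod_cast this
  have hb : (cloudSize H U : ℝ) ≤ ((B \ A).card : ℝ) := by exact_mod_cast hUsize
  have hV : (Fintype.card V : ℝ) ≤ (Y.card : ℝ) + (cloudSize H (W \ U) : ℝ) + (cloudSize H U : ℝ) := by
    have : (Fintype.card V : ℝ) ≤ (Y.card : ℝ) + (cloudSize H W : ℝ) := by
      exact_mod_cast hVle
    rw [hsplit] at this
    push_cast at this
    linarith
  have hmain : ((3 : ℝ) / 4) * (Fintype.card V : ℝ) ≤ ((B \ A).card : ℝ) := by
    have hy : (0:ℝ) ≤ (Y.card : ℝ) := Nat.cast_nonneg _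
    nlinarith [htameU, hb, hV]
  refine ⟨hmain, ?_, ?_⟩
  · calc ((2 : ℝ) / 3) * (Fintype.card V : ℝ) < ((3 : ℝ) / 4) * (Fintype.card V : ℝ) := by
          linarith
      _ ≤ _ := hmain
  · rintro ⟨-, -, hbal⟩
    have hverts : ((⊤ : F.Subgraph).verts.ncard : ℝ) = (Fintype.card V : ℝ) := by
      rw [SimpleGraph.Subgraph.verts_top, Set.ncard_univ, Nat.card_eq_fintype_card]
    have : (3 : ℝ) * ((B \ A).card : ℝ) ≤ 2 * (Fintype.card V : ℝ) := by
      rw [← hverts]; exact_mod_cast hbal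
    linarith [hmain]
end
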